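/- arXiv:1612.01453 — 5 statements merged into one kernel-verified Lean document; each statement's English description precedes it below -/
import Mathlib

section
/- Let H be a nonempty compact convex subset of the plane ℝ² (i.e., ℝ × ℝ). Then the slide curve S(H) is a rectifiable simple closed curve; concretely, there exist a real number L > 0 and a Lipschitz map γ : ℝ → (ℝ × ℝ) × (ℝ × ℝ) such that γ(t + L) = γ(t) for every t ∈ ℝ, γ is injective on the half-open interval [0, L), and the range of γ equals S(H). -/
/-!
Identify the plane with `ℂ`. A pointed supporting line `(P, u)` of `H` is the same thing as the
point `z = P - i u` at distance `1` from `H`: `P` is the nearest point of `H` to `z`, and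
`u = i (z - P)` is the outward unit normal `z - P` turned by a right angle. So `S(H)` is the
image of the level set `{z | d(z, H) = 1}` under `z ↦ (P(z), i (z - P(z)))`, a map that is
injective, and Lipschitz because the nearest-point map onto a convex set is `1`-Lipschitz.

The distance to a convex set is a convex function, so for `c ∈ H` the sublevel set `{d ≤ 1}` is
a convex body around `c` whose gauge equals `1` exactly on the level set. Hence the radial map
`θ ↦ c + e^{iθ} / gauge(e^{iθ})` parametrizes the level set, injectively over one period, and it
is Lipschitz because the gauge is Lipschitz and bounded below on the unit circle.
-/

open Set

/-- The cross product of two planar vectors. -/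
noncomputable def cross (u w : ℝ × ℝ) : ℝ := u.1 * w.2 - u.2 * w.1

/-- `(P, u)` is a pointed supporting line of `H`: `P ∈ H`, `u` is a Euclidean unit
vector, and `H` lies on the left of the directed line through `P` with direction `u`. -/
def IsPointedSupportingLine (H : Set (ℝ × ℝ)) (P u : ℝ × ℝ) : Prop :=
  P ∈ H ∧ u.1 ^ 2 + u.2 ^ 2 = 1 ∧ ∀ Q ∈ H, 0 ≤ cross u (Q - P)

/-- The slide curve of `H`: the set of its pointed supporting lines. -/
def slideCurve (H : Set (ℝ × ℝ)) : Set ((ℝ × ℝ) × (ℝ × ℝ)) :=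
  {Pu | IsPointedSupportingLine H Pu.1 Pu.2}

open Metric Filter Topology
open scoped InnerProductSpace Real

section NearestPoint

noncomputable def nearestPoint {α : Type*} [PseudoMetricSpace α] [Nonempty α] (K : Set α)
    (z : α) : α :=
  Classical.epsilon fun p => p ∈ K ∧ dist z p = infDist z K

theorem nearestPoint_spec {α : Type*} [PseudoMetricSpace α] [Nonempty α] {K : Set α}
    (hK : IsCompact K) (hne : K.Nonempty) (z : α) :
    nearestPoint K z ∈ K ∧ dist z (nearestPoint K z) = infDist z K :=
  have ⟨p, hp, h⟩ := hK.exists_infDist_eq_dist hne z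
  Classical.epsilon_spec (p := fun p => p ∈ K ∧ dist z p = infDist z K) ⟨p, hp, h.symm⟩

variable {E : Type*} [NormedAddCommGroup E] [InnerProductSpace ℝ E] {K : Set E} {x y z p q : E}

theorem norm_sub_le_of_inner_le_zero (hx : ⟪x - p, q - p⟫_ℝ ≤ 0) (hy : ⟪y - q, p - q⟫_ℝ ≤ 0) :
    ‖p - q‖ ≤ ‖x - y‖ := by
  have hsum : ⟪x - p, q - p⟫_ℝ + ⟪y - q, p - q⟫_ℝ = ‖p - q‖ ^ 2 - ⟪x - y, p - q⟫_ℝ := by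
    rw [← real_inner_self_eq_norm_sq]
    simp only [inner_sub_left, inner_sub_right, real_inner_comm]
    ring
  have hcs := real_inner_le_norm (x - y) (p - q)
  nlinarith [norm_nonneg (p - q), norm_nonneg (x - y)]

theorem dist_eq_infDist_iff_inner_le_zero (hK : Convex ℝ K) (hp : p ∈ K) :
    dist z p = infDist z K ↔ ∀ q ∈ K, ⟪z - p, q - p⟫_ℝ ≤ 0 := by
  rw [dist_eq_norm, infDist_eq_iInf, ← norm_eq_iInf_iff_real_inner_le_zero hK hp]
  simp only [dist_eq_norm]

theorem inner_sub_nearestPoint_le_zero (hK : IsCompact K) (hne : K.Nonempty)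
    (hconv : Convex ℝ K) (z : E) :
    ∀ q ∈ K, ⟪z - nearestPoint K z, q - nearestPoint K z⟫_ℝ ≤ 0 :=
  let ⟨hmem, hdist⟩ := nearestPoint_spec hK hne z
  (dist_eq_infDist_iff_inner_le_zero hconv hmem).1 hdist

theorem lipschitzWith_nearestPoint (hK : IsCompact K) (hne : K.Nonempty) (hconv : Convex ℝ K) :
    LipschitzWith 1 (nearestPoint K) :=
  LipschitzWith.of_dist_le_mul fun x y => by
    rw [NNReal.coe_one, one_mul, dist_eq_norm, dist_eq_norm]
    exact norm_sub_le_of_inner_le_zero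
      (inner_sub_nearestPoint_le_zero hK hne hconv x _ (nearestPoint_spec hK hne y).1)
      (inner_sub_nearestPoint_le_zero hK hne hconv y _ (nearestPoint_spec hK hne x).1)

theorem nearestPoint_eq_of_inner_le_zero (hK : IsCompact K) (hne : K.Nonempty)
    (hconv : Convex ℝ K) (hp : p ∈ K) (h : ∀ q ∈ K, ⟪z - p, q - p⟫_ℝ ≤ 0) :
    nearestPoint K z = p := by
  have := norm_sub_le_of_inner_le_zero (inner_sub_nearestPoint_le_zero hK hne hconv z p hp)
    (h _ (nearestPoint_spec hK hne z).1)
  rwa [sub_self, norm_zero, norm_le_zero_iff, sub_eq_zero] at this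

end NearestPoint

section Gauge

variable {E : Type*} [NormedAddCommGroup E] [NormedSpace ℝ E]

theorem convexOn_infDist {K : Set E} (hK : Convex ℝ K) : ConvexOn ℝ univ (infDist · K) := by
  refine ⟨convex_univ, fun x _ y _ a b ha hb hab => ?_⟩
  rcases K.eq_empty_or_nonempty with rfl | hne
  · simp
  refine le_of_forall_pos_le_add fun ε hε => ?_
  obtain ⟨p, hp, hxp⟩ := (infDist_lt_iff hne).1 (lt_add_of_pos_right (infDist x K) hε)
  obtain ⟨q, hq, hyq⟩ := (infDist_lt_iff hne).1 (lt_add_of_pos_right (infDist y K) hε)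
  calc infDist (a • x + b • y) K ≤ dist (a • x + b • y) (a • p + b • q) :=
        infDist_le_dist_of_mem (hK hp hq ha hb hab)
    _ ≤ a * dist x p + b * dist y q := by
        rw [dist_eq_norm, dist_eq_norm, dist_eq_norm,
          show a • x + b • y - (a • p + b • q) = a • (x - p) + b • (y - q) by
            simp only [smul_sub]; abel]
        refine (norm_add_le _ _).trans_eq ?_
        rw [norm_smul_of_nonneg ha, norm_smul_of_nonneg hb]
    _ ≤ a * (infDist x K + ε) + b * (infDist y K + ε) := by gcongr
    _ = a • infDist x K + b • infDist y K + ε := by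
        simp only [smul_eq_mul]; linear_combination ε * hab

theorem ConvexOn.gauge_setOf_le_one_eq_one_iff {f : E → ℝ} (hf : ConvexOn ℝ univ f)
    (hfc : Continuous f) (h0 : f 0 < 1) {x : E} : gauge {y | f y ≤ 1} x = 1 ↔ f x = 1 := by
  set s := {y | f y ≤ 1}
  have hopen : IsOpen {y | f y < 1} := isOpen_lt hfc continuous_const
  have hs : s ∈ 𝓝 0 := mem_of_superset (hopen.mem_nhds h0) fun y (hy : f y < 1) => hy.le
  have hle : gauge s x ≤ 1 ↔ f x ≤ 1 := by
    rw [gauge_le_one_iff_mem_closure (by simpa using hf.convex_le 1) hs,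
      (isClosed_le hfc continuous_const).closure_eq]
    rfl
  have hlt : gauge s x < 1 ↔ f x < 1 := by
    refine ⟨fun h => ?_, fun h => interior_subset_gauge_lt_one s <|
      interior_mono (fun y (hy : f y < 1) => hy.le) (hopen.interior_eq ▸ h)⟩
    obtain ⟨a, ha0, ha1, y, hy, rfl⟩ := exists_lt_of_gauge_lt (absorbent_nhds_zero hs) h
    calc f (a • y) = f (a • y + (1 - a) • 0) := by rw [smul_zero, add_zero]
      _ ≤ a • f y + (1 - a) • f 0 := hf.2 trivial trivial ha0.le (by linarith) (by ring)
      _ < 1 := by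
        simp only [smul_eq_mul]
        nlinarith [show f y ≤ 1 from hy]
  rw [eq_iff_le_not_lt, eq_iff_le_not_lt, hle, hlt]

variable {s : Set E} {δ R : NNReal}

theorem inv_le_gauge_of_norm_eq_one (habs : Absorbent ℝ s) (hsR : s ⊆ closedBall 0 R) {v : E}
    (hv : ‖v‖ = 1) : (R : ℝ)⁻¹ ≤ gauge s v := by
  simpa [hv] using le_gauge_of_subset_closedBall habs R.2 hsR (x := v)

theorem Convex.lipschitzOnWith_inv_gauge_sphere (hs : Convex ℝ s) (hδ : 0 < δ) (hR : 0 < R)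
    (hball : ball 0 δ ⊆ s) (hsR : s ⊆ closedBall 0 R) :
    LipschitzOnWith (R ^ 2 / δ) (fun v => (gauge s v)⁻¹) (sphere 0 1) := by
  have habs : Absorbent ℝ s := (absorbent_ball_zero (NNReal.coe_pos.2 hδ)).mono hball
  refine LipschitzOnWith.of_dist_le_mul fun v hv w hw => ?_
  have hv' := inv_le_gauge_of_norm_eq_one habs hsR (mem_sphere_zero_iff_norm.1 hv)
  have hw' := inv_le_gauge_of_norm_eq_one habs hsR (mem_sphere_zero_iff_norm.1 hw)
  have hRinv : 0 < (R : ℝ)⁻¹ := inv_pos.2 (NNReal.coe_pos.2 hR)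
  have hgauge : dist (gauge s w) (gauge s v) ≤ dist v w / δ := by
    rw [dist_comm v, div_eq_inv_mul, ← NNReal.coe_inv]
    exact (hs.lipschitzWith_gauge hδ hball).dist_le_mul w v
  rw [Real.dist_eq, inv_sub_inv (hRinv.trans_le hv').ne' (hRinv.trans_le hw').ne', abs_div,
    abs_of_pos (mul_pos (hRinv.trans_le hv') (hRinv.trans_le hw')),
    div_le_iff₀ (mul_pos (hRinv.trans_le hv') (hRinv.trans_le hw')), ← Real.dist_eq]
  calc dist (gauge s w) (gauge s v) ≤ dist v w / δ := hgauge
    _ = R ^ 2 / δ * dist v w * ((R : ℝ)⁻¹ * (R : ℝ)⁻¹) := by field_simp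
    _ ≤ R ^ 2 / δ * dist v w * (gauge s v * gauge s w) := by
        gcongr
        exact gauge_nonneg v

theorem Convex.lipschitzOnWith_gaugeRescale_sphere (hs : Convex ℝ s) (hδ : 0 < δ) (hR : 0 < R)
    (hball : ball 0 δ ⊆ s) (hsR : s ⊆ closedBall 0 R) :
    LipschitzOnWith (R ^ 2 / δ + R) (gaugeRescale (closedBall 0 1) s) (sphere 0 1) := by
  have habs : Absorbent ℝ s := (absorbent_ball_zero (NNReal.coe_pos.2 hδ)).mono hball
  have hinv := hs.lipschitzOnWith_inv_gauge_sphere hδ hR hball hsR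
  have hupper : ∀ w ∈ sphere (0 : E) 1, (gauge s w)⁻¹ ≤ R := fun w hw =>
    inv_le_of_inv_le₀ (NNReal.coe_pos.2 hR)
      (inv_le_gauge_of_norm_eq_one habs hsR (mem_sphere_zero_iff_norm.1 hw))
  have heq : ∀ v ∈ sphere (0 : E) 1, gaugeRescale (closedBall 0 1) s v = (gauge s v)⁻¹ • v :=
    fun v hv => by
      rw [gaugeRescale_def, gauge_closedBall zero_le_one, mem_sphere_zero_iff_norm.1 hv, div_one,
        one_div]
  refine LipschitzOnWith.of_dist_le_mul fun v hv w hw => ?_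
  rw [heq v hv, heq w hw, dist_eq_norm, dist_eq_norm]
  calc ‖(gauge s v)⁻¹ • v - (gauge s w)⁻¹ • w‖
      = ‖((gauge s v)⁻¹ - (gauge s w)⁻¹) • v + (gauge s w)⁻¹ • (v - w)‖ := by
        rw [sub_smul, smul_sub]; abel_nf
    _ ≤ dist (gauge s v)⁻¹ (gauge s w)⁻¹ * ‖v‖ + (gauge s w)⁻¹ * ‖v - w‖ := by
        refine (norm_add_le _ _).trans_eq ?_
        rw [norm_smul, norm_smul, Real.norm_eq_abs, Real.norm_eq_abs, abs_inv, Real.dist_eq,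
          abs_of_nonneg (gauge_nonneg w)]
    _ ≤ R ^ 2 / δ * ‖v - w‖ * 1 + R * ‖v - w‖ := by
        rw [mem_sphere_zero_iff_norm.1 hv, ← dist_eq_norm]
        gcongr
        exacts [hinv.dist_le_mul v hv w hw, hupper w hw]
    _ = ↑(R ^ 2 / δ + R) * ‖v - w‖ := by push_cast; ring

end Gauge

section RadialLoop

open Complex

/-- The point where the ray from `0` through `e^{iθ}` meets `{x | gauge s x = 1}`. -/
noncomputable def radialLoop (s : Set ℂ) (θ : ℝ) : ℂ :=
  gaugeRescale (closedBall 0 1) s (circleMap 0 1 θ)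

variable {s : Set ℂ}

theorem periodic_radialLoop (s : Set ℂ) : Function.Periodic (radialLoop s) (2 * π) := fun θ => by
  simp only [radialLoop, periodic_circleMap 0 1 θ]

theorem injOn_radialLoop (hsa : Absorbent ℝ s) (hsb : Bornology.IsBounded s) :
    InjOn (radialLoop s) (Ico 0 (2 * π)) :=
  (gaugeRescaleEquiv (closedBall 0 1) s (absorbent_ball_zero one_pos |>.mono ball_subset_closedBall)
    (NormedSpace.isVonNBounded_closedBall ℝ ℂ 1) hsa
    ((NormedSpace.isVonNBounded_iff ℝ).2 hsb)).injective.comp_injOn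
    (injOn_circleMap_of_abs_sub_le' one_ne_zero (by simp))

theorem range_radialLoop (hsa : Absorbent ℝ s) (hsb : Bornology.IsBounded s) :
    range (radialLoop s) = {x | gauge s x = 1} := by
  ext x
  constructor
  · rintro ⟨θ, rfl⟩
    have hθ : circleMap 0 1 θ ≠ 0 := circleMap_ne_center one_ne_zero
    rw [mem_ofPred_eq, radialLoop, gauge_gaugeRescale' _
      ((gauge_pos hsa ((NormedSpace.isVonNBounded_iff ℝ).2 hsb)).2 hθ).ne',
      gauge_closedBall zero_le_one, norm_circleMap_zero, abs_one, div_one]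
  · intro (hx : gauge s x = 1)
    have hx0 : ‖x‖ ≠ 0 := by rintro h; simp [norm_eq_zero.1 h] at hx
    have hdir : circleMap 0 1 (arg x) = ‖x‖⁻¹ • x := by
      rw [eq_comm, real_smul, ofReal_inv, inv_mul_eq_iff_eq_mul₀ (ofReal_ne_zero.2 hx0),
        circleMap_zero, ofReal_one, one_mul, norm_mul_exp_arg_mul_I]
    refine ⟨arg x, ?_⟩
    rw [radialLoop, hdir, gaugeRescale_smul _ _ (inv_nonneg.2 (norm_nonneg x)), gaugeRescale_def,
      gauge_closedBall zero_le_one, hx, div_one, div_one, smul_smul, inv_mul_cancel₀ hx0, one_smul]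

theorem lipschitzWith_radialLoop (hs : Convex ℝ s) {δ R : NNReal} (hδ : 0 < δ) (hR : 0 < R)
    (hball : ball 0 δ ⊆ s) (hsR : s ⊆ closedBall 0 R) :
    LipschitzWith (R ^ 2 / δ + R) (radialLoop s) := by
  have := (hs.lipschitzOnWith_gaugeRescale_sphere hδ hR hball hsR).comp
    ((lipschitzWith_circleMap 0 1).lipschitzOnWith (s := univ))
    (fun θ _ => circleMap_mem_sphere 0 zero_le_one θ)
  rw [map_one, mul_one] at this
  exact lipschitzOnWith_univ.1 this

end RadialLoop

theorem exists_lipschitz_loop_infDist_eq_one {K : Set ℂ} (hK : IsCompact K) (hKc : Convex ℝ K)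
    {c : ℂ} (hc : c ∈ K) :
    ∃ (C : NNReal) (σ : ℝ → ℂ), LipschitzWith C σ ∧ Function.Periodic σ (2 * π) ∧
      InjOn σ (Ico 0 (2 * π)) ∧ range σ = {z | infDist z K = 1} := by
  set f : ℂ → ℝ := fun x => infDist (c + x) K
  set s := {x | f x ≤ 1}
  have hf : ConvexOn ℝ univ f := by
    have := (convexOn_infDist hKc).translate_right c
    rwa [preimage_univ] at this
  have hfc : Continuous f := (continuous_infDist_pt K).comp (continuous_const_add c)
  have hball : ball 0 (1 : NNReal) ⊆ s := fun x hx =>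
    calc f x ≤ dist (c + x) c := infDist_le_dist_of_mem hc
      _ ≤ 1 := by simpa using (mem_ball_zero_iff.1 hx).le
  set R : NNReal := 1 + (diam K).toNNReal
  have hsR : s ⊆ closedBall 0 R := fun x (hx : f x ≤ 1) => by
    have := dist_le_infDist_add_diam (x := c + x) hK.isBounded hc
    rw [dist_self_add_left] at this
    rw [mem_closedBall_zero_iff, NNReal.coe_add, NNReal.coe_one, Real.coe_toNNReal _ diam_nonneg]
    linarith
  have hsa : Absorbent ℝ s := (absorbent_ball_zero one_pos).mono hball
  have hsb : Bornology.IsBounded s := isBounded_closedBall.subset hsR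
  have hlevel : ∀ x, gauge s x = 1 ↔ infDist (c + x) K = 1 :=
    fun x => hf.gauge_setOf_le_one_eq_one_iff hfc (by simp [f, infDist_zero_of_mem hc])
  refine ⟨_, fun θ => c + radialLoop s θ, (isometry_add_left c).lipschitz.comp
      (lipschitzWith_radialLoop (by simpa using hf.convex_le 1) one_pos (by positivity) hball hsR),
    fun θ => congrArg (c + ·) (periodic_radialLoop s θ),
    (add_right_injective c).comp_injOn (injOn_radialLoop hsa hsb), ?_⟩
  rw [range_comp' (c + ·), range_radialLoop hsa hsb]
  ext z
  refine ⟨?_, fun (hz : infDist z K = 1) => ⟨z - c, (hlevel _).2 ?_, add_sub_cancel c z⟩⟩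
  · rintro ⟨x, hx, rfl⟩
    exact (hlevel x).1 hx
  · rwa [add_sub_cancel]

section SlideMap

open Complex

theorem cross_equivRealProd_I_mul (n w : ℂ) :
    cross (equivRealProd (I * n)) (equivRealProd w) = -⟪n, w⟫_ℝ := by
  simp only [cross, equivRealProd_apply, mul_re, mul_im, I_re, I_im, Complex.inner, conj_re,
    conj_im]
  ring

theorem mem_slideCurve_iff {K : Set ℂ} {p n : ℂ} :
    (equivRealProd p, equivRealProd (I * n)) ∈ slideCurve (equivRealProd.symm ⁻¹' K) ↔
      p ∈ K ∧ ‖n‖ = 1 ∧ ∀ q ∈ K, ⟪n, q - p⟫_ℝ ≤ 0 := by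
  have hnorm : (equivRealProd (I * n)).1 ^ 2 + (equivRealProd (I * n)).2 ^ 2 = ‖n‖ ^ 2 := by
    simp only [equivRealProd_apply, mul_re, mul_im, I_re, I_im, Complex.sq_norm, normSq_apply]
    ring
  have hcross : ∀ Q, cross (equivRealProd (I * n)) (Q - equivRealProd p) =
      -⟪n, equivRealProd.symm Q - p⟫_ℝ := fun Q => by
    rw [← cross_equivRealProd_I_mul]
    congr 1
  simp only [slideCurve, IsPointedSupportingLine, mem_ofPred_eq, mem_preimage,
    Equiv.symm_apply_apply, hnorm, pow_eq_one_iff_of_nonneg (norm_nonneg n) two_ne_zero,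
    equivRealProd.forall_congr_left, hcross, neg_nonneg]

noncomputable def slideMap (K : Set ℂ) (z : ℂ) : (ℝ × ℝ) × (ℝ × ℝ) :=
  (equivRealProd (nearestPoint K z), equivRealProd (I * (z - nearestPoint K z)))

variable {K : Set ℂ}

theorem slideMap_eq_iff {z p n : ℂ} :
    slideMap K z = (equivRealProd p, equivRealProd (I * n)) ↔
      nearestPoint K z = p ∧ z - nearestPoint K z = n := by
  simp only [slideMap, Prod.mk.injEq, equivRealProd.injective.eq_iff, mul_right_inj' I_ne_zero]

theorem injective_slideMap (K : Set ℂ) : Function.Injective (slideMap K) := fun z w h => by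
  obtain ⟨hp, hn⟩ := slideMap_eq_iff.1 h
  rw [hp] at hn
  exact sub_left_injective hn

theorem lipschitzWith_slideMap (hK : IsCompact K) (hne : K.Nonempty) (hconv : Convex ℝ K) :
    LipschitzWith 2 (slideMap K) := by
  have hp := lipschitzWith_nearestPoint hK hne hconv
  refine ((lipschitz_equivRealProd.comp hp).prodMk (lipschitz_equivRealProd.comp
    ((lipschitzWith_smul I).comp (LipschitzWith.id.sub hp)))).weaken ?_
  simp only [nnnorm_I]
  norm_num

theorem image_slideMap_infDist_eq_one (hK : IsCompact K) (hne : K.Nonempty) (hconv : Convex ℝ K) :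
    slideMap K '' {z | infDist z K = 1} = slideCurve (equivRealProd.symm ⁻¹' K) := by
  ext ⟨P, u⟩
  obtain ⟨p, rfl⟩ := equivRealProd.surjective P
  obtain ⟨n, rfl⟩ : ∃ n, equivRealProd (I * n) = u :=
    ⟨-I * equivRealProd.symm u, by rw [← mul_assoc]; simp⟩
  rw [mem_slideCurve_iff]
  constructor
  · rintro ⟨z, hz, hzPu⟩
    obtain ⟨rfl, rfl⟩ := slideMap_eq_iff.1 hzPu
    obtain ⟨hmem, hdist⟩ := nearestPoint_spec hK hne z
    refine ⟨hmem, ?_, inner_sub_nearestPoint_le_zero hK hne hconv z⟩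
    rw [← dist_eq_norm, hdist, hz]
  · rintro ⟨hp, hn, hsupp⟩
    have hsupp' : ∀ q ∈ K, ⟪p + n - p, q - p⟫_ℝ ≤ 0 := by simpa using hsupp
    have hnear := nearestPoint_eq_of_inner_le_zero hK hne hconv hp hsupp'
    refine ⟨p + n, ?_, slideMap_eq_iff.2 ⟨hnear, by rw [hnear, add_sub_cancel_left]⟩⟩
    rw [mem_ofPred_eq, ← (dist_eq_infDist_iff_inner_le_zero hconv hp).2 hsupp', dist_eq_norm,
      add_sub_cancel_left, hn]

end SlideMap

/-- For a nonempty compact convex `H ⊆ ℝ²`, the slide curve `S(H)` is a rectifiable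
simple closed curve: there are `L > 0` and a Lipschitz map `γ : ℝ → ℝ² × ℝ²`,
periodic with period `L`, injective on `[0, L)`, whose range is `S(H)`. -/
theorem slideCurve_is_rectifiable_simple_closed_curve
    (H : Set (ℝ × ℝ)) (hne : H.Nonempty) (hcomp : IsCompact H) (hconv : Convex ℝ H) :
    ∃ L : ℝ, 0 < L ∧ ∃ (K : NNReal) (γ : ℝ → (ℝ × ℝ) × (ℝ × ℝ)),
      LipschitzWith K γ ∧ (∀ t : ℝ, γ (t + L) = γ t) ∧
      Set.InjOn γ (Set.Ico 0 L) ∧ Set.range γ = slideCurve H := by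
  set K : Set ℂ := Complex.equivRealProd ⁻¹' H
  have hKcomp : IsCompact K := Complex.equivRealProdCLM.toHomeomorph.isCompact_preimage.2 hcomp
  have hKconv : Convex ℝ K := hconv.linear_preimage Complex.equivRealProdLm.toLinearMap
  obtain ⟨c, hc⟩ : K.Nonempty := hne.preimage Complex.equivRealProd.surjective
  obtain ⟨C, σ, hσ, hper, hinj, hrange⟩ := exists_lipschitz_loop_infDist_eq_one hKcomp hKconv hc
  refine ⟨2 * π, Real.two_pi_pos, _, slideMap K ∘ σ,
    (lipschitzWith_slideMap hKcomp ⟨c, hc⟩ hKconv).comp hσ,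
    fun t => congrArg (slideMap K) (hper t), (injective_slideMap K).comp_injOn hinj, ?_⟩
  rw [range_comp, hrange, image_slideMap_infDist_eq_one hKcomp ⟨c, hc⟩ hKconv,
    Equiv.symm_preimage_preimage]
end

section
/- Let H₁ and H₂ be disjoint compact convex subsets of the plane ℝ² = ℝ × ℝ, each with nonempty interior. Then the set of lines that support both H₁ and H₂ has exactly four elements, i.e., {L : Set (ℝ × ℝ) | L supports H₁ and L supports H₂} has cardinality 4. -/
/-!
Describe a common supporting line by the unit normal `a` of its half plane containing `H₁`: it
is the line `a·x = h₁(a)`, where `hᵢ` is the support function of `Hᵢ`, and it supports `H₂` from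
the same side iff `h₁(a) = h₂(a)` (outer tangent), from the other side iff `h₁(a) + h₂(-a) = 0`
(inner tangent). The positive width of `H₁` makes `a` unique, that of `H₂` makes the two cases
exclusive. If `u` strictly separates the sets, then `h₁ - h₂` and `a ↦ h₁(a) + h₂(-a)` are
positive at `u` and negative at `-u`, so each vanishes on both half circles bounded by `±u`, and
it vanishes only once there: two outer tangents on the same side bound a wedge in which the
segments joining the touching points cross, against convexity and disjointness; two inner
tangents on the same side would meet at a point lying between the sets in the direction `u`.
-/

open Set

/-- `L` is a (non-directed) supporting line of `H ⊆ ℝ²`: for some `a ≠ 0` and `c`,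
`L = {x : a·x = c}`, `H ⊆ {x : a·x ≤ c}`, and `L` meets `H`. -/
def IsSupportingLine (L H : Set (ℝ × ℝ)) : Prop :=
  ∃ (a : ℝ × ℝ) (c : ℝ), a ≠ 0 ∧
    L = {x : ℝ × ℝ | a.1 * x.1 + a.2 * x.2 = c} ∧
    (∀ x ∈ H, a.1 * x.1 + a.2 * x.2 ≤ c) ∧
    (L ∩ H).Nonempty

namespace CommonSupportingLines

def dot (a x : ℝ × ℝ) : ℝ := a.1 * x.1 + a.2 * x.2

def cross (a b : ℝ × ℝ) : ℝ := a.1 * b.2 - a.2 * b.1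

def perp (a : ℝ × ℝ) : ℝ × ℝ := (-a.2, a.1)

lemma continuous_dot (a : ℝ × ℝ) : Continuous (dot a) := by
  unfold dot; fun_prop

lemma dot_neg_left (a x : ℝ × ℝ) : dot (-a) x = -dot a x := by
  simp only [dot, Prod.fst_neg, Prod.snd_neg]; ring

lemma dot_smul_left (r : ℝ) (a x : ℝ × ℝ) : dot (r • a) x = r * dot a x := by
  simp only [dot, Prod.smul_fst, Prod.smul_snd, smul_eq_mul]; ring

lemma dot_self_smul {a : ℝ × ℝ} (ha : a.1 ^ 2 + a.2 ^ 2 = 1) (c : ℝ) : dot a (c • a) = c := by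
  simp only [dot, Prod.smul_fst, Prod.smul_snd, smul_eq_mul]; linear_combination c * ha

lemma dot_add_smul_perp (b p a : ℝ × ℝ) (t : ℝ) :
    dot b (p + t • perp a) = dot b p + t * cross a b := by
  simp only [dot, cross, perp, Prod.fst_add, Prod.snd_add, Prod.smul_fst, Prod.smul_snd,
    smul_eq_mul]
  ring

lemma cross_comm (a b : ℝ × ℝ) : cross b a = -cross a b := by
  simp only [cross]; ring

lemma cross_self (a : ℝ × ℝ) : cross a a = 0 := by
  simp only [cross]; ring

lemma cross_neg_left (a b : ℝ × ℝ) : cross (-a) b = -cross a b := by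
  simp only [cross, Prod.fst_neg, Prod.snd_neg]; ring

lemma cross_neg_right (a b : ℝ × ℝ) : cross a (-b) = -cross a b := by
  simp only [cross, Prod.fst_neg, Prod.snd_neg]; ring

lemma ne_zero_of_unit {a : ℝ × ℝ} (ha : a.1 ^ 2 + a.2 ^ 2 = 1) : a ≠ 0 := by
  rintro rfl; norm_num at ha

lemma neg_unit {a : ℝ × ℝ} (ha : a.1 ^ 2 + a.2 ^ 2 = 1) : (-a).1 ^ 2 + (-a).2 ^ 2 = 1 := by
  simpa only [Prod.fst_neg, Prod.snd_neg, neg_sq] using ha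

lemma sq_add_sq_pos_of_ne_zero {a : ℝ × ℝ} (ha : a ≠ 0) : 0 < a.1 ^ 2 + a.2 ^ 2 := by
  have : a.1 ≠ 0 ∨ a.2 ≠ 0 := by
    by_contra! h; exact ha (Prod.ext h.1 h.2)
  rcases this with h | h <;> positivity

lemma exists_pos_smul_unit {a : ℝ × ℝ} (ha : a ≠ 0) :
    ∃ r : ℝ, 0 < r ∧ (r • a).1 ^ 2 + (r • a).2 ^ 2 = 1 := by
  have hn := sq_add_sq_pos_of_ne_zero ha
  refine ⟨(√(a.1 ^ 2 + a.2 ^ 2))⁻¹, by positivity, ?_⟩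
  simp only [Prod.smul_fst, Prod.smul_snd, smul_eq_mul, mul_pow, inv_pow,
    Real.sq_sqrt hn.le, ← mul_add, inv_mul_cancel₀ hn.ne']

lemma eq_or_eq_neg_of_cross_eq_zero {a b : ℝ × ℝ} (ha : a.1 ^ 2 + a.2 ^ 2 = 1)
    (hb : b.1 ^ 2 + b.2 ^ 2 = 1) (h : cross a b = 0) : b = a ∨ b = -a := by
  simp only [cross] at h
  set c := a.1 * b.1 + a.2 * b.2
  have hb₁ : b.1 = c * a.1 := by linear_combination (-b.1) * ha + (-a.2) * h
  have hb₂ : b.2 = c * a.2 := by linear_combination (-b.2) * ha + a.1 * h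
  have hc : (c - 1) * (c + 1) = 0 := by
    linear_combination (a.1 ^ 2 + a.2 ^ 2) * hb + ha - (a.1 * b.2 - a.2 * b.1) * h
  rcases mul_eq_zero.mp hc with hc | hc
  · left; ext
    · linear_combination hb₁ + a.1 * hc
    · linear_combination hb₂ + a.2 * hc
  · right; ext <;> simp only [Prod.fst_neg, Prod.snd_neg]
    · linear_combination hb₁ + a.1 * hc
    · linear_combination hb₂ + a.2 * hc

lemma eq_add_smul_perp_of_dot_eq {a x p : ℝ × ℝ} (ha : a.1 ^ 2 + a.2 ^ 2 = 1)
    (h : dot a x = dot a p) : ∃ t : ℝ, x = p + t • perp a := by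
  refine ⟨a.1 * (x.2 - p.2) - a.2 * (x.1 - p.1), ?_⟩
  simp only [dot] at h
  ext <;> simp only [perp, Prod.fst_add, Prod.snd_add, Prod.smul_fst, Prod.smul_snd, smul_eq_mul]
  · linear_combination a.1 * h - (x.1 - p.1) * ha
  · linear_combination a.2 * h - (x.2 - p.2) * ha

lemma exists_dot_eq_dot_eq {a b : ℝ × ℝ} (hab : cross a b ≠ 0) (c₁ c₂ : ℝ) :
    ∃ p : ℝ × ℝ, dot a p = c₁ ∧ dot b p = c₂ := by
  refine ⟨((c₁ * b.2 - c₂ * a.2) / cross a b, (c₂ * a.1 - c₁ * b.1) / cross a b), ?_, ?_⟩ <;>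
  · simp only [dot, cross] at hab ⊢
    rw [mul_div_assoc', mul_div_assoc', ← add_div, div_eq_iff hab]
    ring

lemma eq_and_eq_or_of_setOf_dot_eq {a b : ℝ × ℝ} {c d : ℝ} (ha : a.1 ^ 2 + a.2 ^ 2 = 1)
    (hb : b.1 ^ 2 + b.2 ^ 2 = 1) (h : {x | dot a x = c} = {x | dot b x = d}) :
    (b = a ∧ d = c) ∨ (b = -a ∧ d = -c) := by
  have hmem : ∀ x, dot a x = c → dot b x = d := fun x hx => (Set.ext_iff.mp h x).mp hx
  have h₀ := hmem (c • a) (dot_self_smul ha c)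
  have h₁ := hmem (c • a + (1 : ℝ) • perp a) (by
    rw [dot_add_smul_perp, dot_self_smul ha, cross_self, mul_zero, add_zero])
  rw [dot_add_smul_perp, h₀, one_mul, add_eq_left] at h₁
  rcases eq_or_eq_neg_of_cross_eq_zero ha hb h₁ with rfl | rfl
  · exact Or.inl ⟨rfl, by rw [← h₀, dot_self_smul ha]⟩
  · exact Or.inr ⟨rfl, by rw [← h₀, dot_neg_left, dot_self_smul ha]⟩

lemma segment_inter_nonempty {E : Type*} [AddCommGroup E] [Module ℝ E] (p v w : E)
    {α₁ β₁ α₂ β₂ : ℝ} (h₁ : α₁ < β₁) (hβ₁ : β₁ ≤ 0) (hα₂ : 0 ≤ α₂) (h₂ : α₂ < β₂) :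
    (segment ℝ (p + α₁ • v) (p + α₂ • w) ∩ segment ℝ (p + β₁ • v) (p + β₂ • w)).Nonempty := by
  -- The weights `λ = β₂ (β₁ - α₁) / D` and `μ = α₂ (β₁ - α₁) / D` solve
  -- `(1 - λ) α₁ = (1 - μ) β₁` and `λ α₂ = μ β₂`.
  set D := β₂ * (β₁ - α₁) + β₁ * (α₂ - β₂)
  have hD : 0 < D := by nlinarith
  have hβ₂ : 0 < β₂ := by linarith
  refine ⟨_, ⟨1 - β₂ * (β₁ - α₁) / D, β₂ * (β₁ - α₁) / D, ?_, ?_, by ring, rfl⟩,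
    1 - α₂ * (β₁ - α₁) / D, α₂ * (β₁ - α₁) / D, ?_, ?_, by ring, ?_⟩
  · rw [sub_nonneg, div_le_one hD]; nlinarith
  · positivity
  · rw [sub_nonneg, div_le_one hD]; nlinarith
  · have := sub_pos.mpr h₁
    positivity
  · match_scalars <;> field_simp <;> ring

noncomputable def supportFun (H : Set (ℝ × ℝ)) (a : ℝ × ℝ) : ℝ := sSup (dot a '' H)

noncomputable def supportLine (H : Set (ℝ × ℝ)) (a : ℝ × ℝ) : Set (ℝ × ℝ) :=
  {x | dot a x = supportFun H a}

section SupportFun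

variable {H : Set (ℝ × ℝ)}

lemma dot_le_supportFun (hc : IsCompact H) {x : ℝ × ℝ} (hx : x ∈ H) (a : ℝ × ℝ) :
    dot a x ≤ supportFun H a :=
  le_csSup (hc.bddAbove_image (continuous_dot a).continuousOn) (mem_image_of_mem _ hx)

lemma exists_dot_eq_supportFun (hc : IsCompact H) (hne : H.Nonempty) (a : ℝ × ℝ) :
    ∃ x ∈ H, dot a x = supportFun H a := by
  obtain ⟨x, hx, h⟩ := hc.exists_sSup_image_eq hne (continuous_dot a).continuousOn
  exact ⟨x, hx, h.symm⟩

lemma continuous_supportFun (hc : IsCompact H) : Continuous (supportFun H) :=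
  hc.continuous_sSup (f := dot) (by unfold Function.HasUncurry.uncurry dot; fun_prop)

lemma supportFun_add_supportFun_neg_nonneg (hc : IsCompact H) (hne : H.Nonempty)
    (a : ℝ × ℝ) : 0 ≤ supportFun H a + supportFun H (-a) := by
  obtain ⟨x, hx⟩ := hne
  have := dot_le_supportFun hc hx (-a)
  rw [dot_neg_left] at this
  linarith [dot_le_supportFun hc hx a]

lemma supportFun_add_supportFun_neg_pos (hc : IsCompact H) (hi : (interior H).Nonempty)
    {a : ℝ × ℝ} (ha : a ≠ 0) : 0 < supportFun H a + supportFun H (-a) := by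
  obtain ⟨z, hz⟩ := hi
  have hline : ∀ᶠ t in nhds (0 : ℝ), z + t • a ∈ H :=
    ((continuous_const.add (continuous_id.smul continuous_const)).tendsto' 0 z
      (by simp)).eventually (mem_interior_iff_mem_nhds.mp hz)
  obtain ⟨ε, hε, hball⟩ := Metric.eventually_nhds_iff.mp hline
  have hfwd := dot_le_supportFun hc (hball (y := ε / 2) (by simp [abs_of_pos, hε])) a
  have hback := dot_le_supportFun hc (hball (y := -(ε / 2)) (by simp [abs_of_pos, hε])) (-a)
  simp only [dot, Prod.fst_add, Prod.snd_add, Prod.smul_fst, Prod.smul_snd, Prod.fst_neg,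
    Prod.snd_neg, smul_eq_mul] at hfwd hback
  nlinarith [sq_add_sq_pos_of_ne_zero ha]

lemma isSupportingLine_supportLine (hc : IsCompact H) (hne : H.Nonempty) {a : ℝ × ℝ}
    (ha : a ≠ 0) : IsSupportingLine (supportLine H a) H := by
  obtain ⟨x, hx, hxa⟩ := exists_dot_eq_supportFun hc hne a
  exact ⟨a, supportFun H a, ha, rfl, fun y hy => dot_le_supportFun hc hy a, x, hxa, hx⟩

lemma isSupportingLine_iff_exists_unit (hc : IsCompact H) (hne : H.Nonempty)
    {L : Set (ℝ × ℝ)} :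
    IsSupportingLine L H ↔ ∃ a : ℝ × ℝ, a.1 ^ 2 + a.2 ^ 2 = 1 ∧ L = supportLine H a := by
  refine ⟨?_, fun ⟨a, ha, hL⟩ => hL ▸ isSupportingLine_supportLine hc hne (ne_zero_of_unit ha)⟩
  rintro ⟨a, c, ha, rfl, hle, z, hzL, hzH⟩
  obtain ⟨r, hr, hunit⟩ := exists_pos_smul_unit ha
  have hsupp : supportFun H (r • a) = r * c := by
    refine IsGreatest.csSup_eq ⟨⟨z, hzH, ?_⟩, ?_⟩
    · rw [dot_smul_left]; exact congrArg (r * ·) hzL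
    · rintro _ ⟨x, hx, rfl⟩
      rw [dot_smul_left]
      exact mul_le_mul_of_nonneg_left (hle x hx) hr.le
  refine ⟨r • a, hunit, ?_⟩
  ext x
  simp only [supportLine, hsupp, dot_smul_left, mem_ofPred_eq, mul_right_inj' hr.ne']
  rfl

end SupportFun

noncomputable def outerGap (H₁ H₂ : Set (ℝ × ℝ)) (a : ℝ × ℝ) : ℝ :=
  supportFun H₁ a - supportFun H₂ a

noncomputable def innerGap (H₁ H₂ : Set (ℝ × ℝ)) (a : ℝ × ℝ) : ℝ :=
  supportFun H₁ a + supportFun H₂ (-a)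

def unitZeros (Φ : ℝ × ℝ → ℝ) : Set (ℝ × ℝ) := {a | a.1 ^ 2 + a.2 ^ 2 = 1 ∧ Φ a = 0}

section TwoSets

variable {H₁ H₂ : Set (ℝ × ℝ)}

lemma supportLine_eq_supportLine_iff {a b : ℝ × ℝ} (ha : a.1 ^ 2 + a.2 ^ 2 = 1)
    (hb : b.1 ^ 2 + b.2 ^ 2 = 1) :
    supportLine H₁ a = supportLine H₂ b ↔
      (b = a ∧ outerGap H₁ H₂ a = 0) ∨ (b = -a ∧ innerGap H₁ H₂ a = 0) := by
  constructor
  · intro h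
    rcases eq_and_eq_or_of_setOf_dot_eq ha hb h with ⟨rfl, h⟩ | ⟨rfl, h⟩
    · exact Or.inl ⟨rfl, by rw [outerGap, h, sub_self]⟩
    · exact Or.inr ⟨rfl, by rw [innerGap, h, add_neg_cancel]⟩
  · rintro (⟨rfl, h⟩ | ⟨rfl, h⟩) <;> ext x
    · simp only [supportLine, mem_ofPred_eq, sub_eq_zero.mp h]
    · simp only [supportLine, mem_ofPred_eq, dot_neg_left, eq_neg_of_add_eq_zero_right h,
        neg_inj]

lemma setOf_isSupportingLine_eq_image (hc₁ : IsCompact H₁) (hc₂ : IsCompact H₂)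
    (hne₁ : H₁.Nonempty) (hne₂ : H₂.Nonempty) :
    {L | IsSupportingLine L H₁ ∧ IsSupportingLine L H₂} =
      supportLine H₁ '' (unitZeros (outerGap H₁ H₂) ∪ unitZeros (innerGap H₁ H₂)) := by
  ext L
  simp only [mem_ofPred_eq, isSupportingLine_iff_exists_unit hc₁ hne₁,
    isSupportingLine_iff_exists_unit hc₂ hne₂, mem_image, mem_union, unitZeros]
  constructor
  · rintro ⟨⟨a, ha, rfl⟩, b, hb, hab⟩
    rcases (supportLine_eq_supportLine_iff ha hb).mp hab with ⟨-, h⟩ | ⟨-, h⟩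
    exacts [⟨a, Or.inl ⟨ha, h⟩, rfl⟩, ⟨a, Or.inr ⟨ha, h⟩, rfl⟩]
  · rintro ⟨a, ⟨ha, h⟩ | ⟨ha, h⟩, rfl⟩
    · exact ⟨⟨a, ha, rfl⟩, a, ha, (supportLine_eq_supportLine_iff ha ha).mpr (Or.inl ⟨rfl, h⟩)⟩
    · exact ⟨⟨a, ha, rfl⟩, -a, neg_unit ha,
        (supportLine_eq_supportLine_iff ha (neg_unit ha)).mpr (Or.inr ⟨rfl, h⟩)⟩

lemma injOn_supportLine (hc : IsCompact H₁) (hi : (interior H₁).Nonempty) :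
    InjOn (supportLine H₁) {a | a.1 ^ 2 + a.2 ^ 2 = 1} := by
  intro a ha b hb h
  rcases (supportLine_eq_supportLine_iff ha hb).mp h with ⟨rfl, -⟩ | ⟨rfl, hgap⟩
  · rfl
  · exact absurd hgap (supportFun_add_supportFun_neg_pos hc hi (ne_zero_of_unit ha)).ne'

lemma disjoint_unitZeros_outerGap_innerGap (hc₂ : IsCompact H₂)
    (hi₂ : (interior H₂).Nonempty) :
    Disjoint (unitZeros (outerGap H₁ H₂)) (unitZeros (innerGap H₁ H₂)) := by
  refine disjoint_left.mpr fun a ⟨ha, hout⟩ ⟨_, hin⟩ => ?_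
  have := supportFun_add_supportFun_neg_pos hc₂ hi₂ (ne_zero_of_unit ha)
  simp only [outerGap, innerGap] at hout hin
  linarith

end TwoSets

section UnitCircle

variable {Φ : ℝ × ℝ → ℝ} {u : ℝ × ℝ}

lemma exists_mem_unitZeros_cross_pos (hΦ : Continuous Φ) (hu : u.1 ^ 2 + u.2 ^ 2 = 1)
    (hpos : 0 < Φ u) (hneg : Φ (-u) < 0) : ∃ a ∈ unitZeros Φ, 0 < cross u a := by
  set γ : ℝ → ℝ × ℝ := fun θ => Real.cos θ • u + Real.sin θ • perp u
  have hγ0 : γ 0 = u := by simp [γ]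
  have hγπ : γ Real.pi = -u := by simp [γ]
  obtain ⟨θ, hθ, hzero⟩ := intermediate_value_Ioo' Real.pi_pos.le
    (hΦ.comp (by fun_prop : Continuous γ)).continuousOn
    (show (0 : ℝ) ∈ Ioo (Φ (γ Real.pi)) (Φ (γ 0)) by rw [hγ0, hγπ]; exact ⟨hneg, hpos⟩)
  refine ⟨γ θ, ⟨?_, hzero⟩, ?_⟩
  · simp only [γ, perp, Prod.fst_add, Prod.snd_add, Prod.smul_fst, Prod.smul_snd, smul_eq_mul]
    linear_combination (u.1 ^ 2 + u.2 ^ 2) * Real.sin_sq_add_cos_sq θ + hu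
  · have : cross u (γ θ) = Real.sin θ := by
      simp only [γ, cross, perp, Prod.fst_add, Prod.snd_add, Prod.smul_fst, Prod.smul_snd,
        smul_eq_mul]
      linear_combination Real.sin θ * hu
    rw [this]
    exact Real.sin_pos_of_pos_of_lt_pi hθ.1 hθ.2

-- `0 < cross u a * cross u b` says that `a` and `b` lie on the same open half circle cut out
-- by `±u`.
lemma ncard_unitZeros_eq_two (hΦ : Continuous Φ) (hu : u.1 ^ 2 + u.2 ^ 2 = 1)
    (hpos : 0 < Φ u) (hneg : Φ (-u) < 0)
    (huniq : ∀ a ∈ unitZeros Φ, ∀ b ∈ unitZeros Φ, 0 < cross u a * cross u b → a = b) :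
    (unitZeros Φ).ncard = 2 := by
  obtain ⟨a₁, ha₁, h₁⟩ := exists_mem_unitZeros_cross_pos hΦ hu hpos hneg
  obtain ⟨a₂, ha₂, h₂⟩ := exists_mem_unitZeros_cross_pos (Φ := -Φ) hΦ.neg (neg_unit hu)
    (by simpa using hneg) (by simpa using hpos)
  have hmem : unitZeros (-Φ) = unitZeros Φ := by simp [unitZeros]
  rw [hmem] at ha₂
  rw [cross_neg_left, neg_pos] at h₂
  suffices unitZeros Φ = {a₁, a₂} by
    rw [this, ncard_pair]
    rintro rfl
    linarith
  refine Subset.antisymm (fun a ha => ?_) (insert_subset ha₁ (singleton_subset_iff.mpr ha₂))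
  have hcross : cross u a ≠ 0 := by
    intro h
    rcases eq_or_eq_neg_of_cross_eq_zero hu ha.1 h with rfl | rfl
    · exact hpos.ne' ha.2
    · exact hneg.ne ha.2
  rcases hcross.lt_or_gt with h | h
  · exact Or.inr (huniq a ha a₂ ha₂ (mul_pos_of_neg_of_neg h h₂))
  · exact Or.inl (huniq a ha a₁ ha₁ (mul_pos h h₁))

end UnitCircle

section Separated

variable {H₁ H₂ : Set (ℝ × ℝ)} {u : ℝ × ℝ}

lemma exists_unit_dot_lt_dot (hdisj : Disjoint H₁ H₂) (hc₁ : IsCompact H₁)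
    (hc₂ : IsCompact H₂) (hv₁ : Convex ℝ H₁) (hv₂ : Convex ℝ H₂) :
    ∃ u : ℝ × ℝ, u.1 ^ 2 + u.2 ^ 2 = 1 ∧ ∀ x ∈ H₁, ∀ y ∈ H₂, dot u y < dot u x := by
  obtain ⟨f, s, t, hfs, hst, hft⟩ :=
    geometric_hahn_banach_compact_closed hv₂ hc₂ hv₁ hc₁.isClosed hdisj.symm
  set w : ℝ × ℝ := (f (1, 0), f (0, 1))
  have hfw : ∀ x, f x = dot w x := by
    intro x
    have hx : x = x.1 • ((1 : ℝ), (0 : ℝ)) + x.2 • ((0 : ℝ), (1 : ℝ)) := by ext <;> simp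
    rw [hx, map_add, map_smul, map_smul]
    simp only [dot, w, smul_eq_mul, Prod.fst_add, Prod.snd_add, Prod.smul_fst, Prod.smul_snd]
    ring
  have hsep : ∀ x ∈ H₁, ∀ y ∈ H₂, dot w y < dot w x := fun x hx y hy => by
    rw [← hfw, ← hfw]; linarith [hfs y hy, hft x hx]
  by_cases hw : w = 0
  · refine ⟨(1, 0), by norm_num, fun x hx y hy => absurd (hsep x hx y hy) ?_⟩
    simp [hw, dot]
  · obtain ⟨r, hr, hunit⟩ := exists_pos_smul_unit hw
    refine ⟨r • w, hunit, fun x hx y hy => ?_⟩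
    simp only [dot_smul_left]
    exact mul_lt_mul_of_pos_left (hsep x hx y hy) hr

lemma supportFun_add_supportFun_neg_lt_zero (hc₁ : IsCompact H₁) (hc₂ : IsCompact H₂)
    (hne₁ : H₁.Nonempty) (hne₂ : H₂.Nonempty)
    (hsep : ∀ x ∈ H₁, ∀ y ∈ H₂, dot u y < dot u x) :
    supportFun H₂ u + supportFun H₁ (-u) < 0 := by
  obtain ⟨x, hx, hux⟩ := exists_dot_eq_supportFun hc₁ hne₁ (-u)
  obtain ⟨y, hy, huy⟩ := exists_dot_eq_supportFun hc₂ hne₂ u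
  rw [dot_neg_left] at hux
  linarith [hsep x hx y hy]

lemma eq_of_cross_eq_zero {a b : ℝ × ℝ} (ha : a.1 ^ 2 + a.2 ^ 2 = 1)
    (hb : b.1 ^ 2 + b.2 ^ 2 = 1) (h : cross a b = 0) (hab : 0 < cross u a * cross u b) :
    a = b := by
  rcases eq_or_eq_neg_of_cross_eq_zero ha hb h with rfl | rfl
  · rfl
  · rw [cross_neg_right, mul_neg] at hab
    linarith [mul_self_nonneg (cross u a)]

lemma cross_nonpos_of_mem_unitZeros_outerGap (hdisj : Disjoint H₁ H₂)
    (hc₁ : IsCompact H₁) (hc₂ : IsCompact H₂) (hv₁ : Convex ℝ H₁) (hv₂ : Convex ℝ H₂)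
    (hne₁ : H₁.Nonempty) (hne₂ : H₂.Nonempty) (hsep : ∀ x ∈ H₁, ∀ y ∈ H₂, dot u y < dot u x)
    {a b : ℝ × ℝ} (ha : a ∈ unitZeros (outerGap H₁ H₂)) (hb : b ∈ unitZeros (outerGap H₁ H₂))
    (hua : 0 < cross u a) (hub : 0 < cross u b) : cross a b ≤ 0 := by
  by_contra! hpos
  -- The two lines meet at `p`; the touching points lie on the two rays from `p` that bound
  -- the wedge containing `H₁ ∪ H₂`, in an order forced by the separation.
  have ha' : supportFun H₂ a = supportFun H₁ a := (sub_eq_zero.mp ha.2).symm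
  have hb' : supportFun H₂ b = supportFun H₁ b := (sub_eq_zero.mp hb.2).symm
  obtain ⟨p, hap, hbp⟩ := exists_dot_eq_dot_eq hpos.ne' (supportFun H₁ a) (supportFun H₁ b)
  obtain ⟨x₁, hx₁, hax₁⟩ := exists_dot_eq_supportFun hc₁ hne₁ a
  obtain ⟨y₁, hy₁, hay₁⟩ := exists_dot_eq_supportFun hc₂ hne₂ a
  obtain ⟨x₂, hx₂, hbx₂⟩ := exists_dot_eq_supportFun hc₁ hne₁ b
  obtain ⟨y₂, hy₂, hby₂⟩ := exists_dot_eq_supportFun hc₂ hne₂ b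
  obtain ⟨α₁, rfl⟩ := eq_add_smul_perp_of_dot_eq ha.1 (hax₁.trans hap.symm)
  obtain ⟨β₁, rfl⟩ := eq_add_smul_perp_of_dot_eq ha.1 (hay₁.trans (ha'.trans hap.symm))
  obtain ⟨α₂, rfl⟩ := eq_add_smul_perp_of_dot_eq hb.1 (hbx₂.trans hbp.symm)
  obtain ⟨β₂, rfl⟩ := eq_add_smul_perp_of_dot_eq hb.1 (hby₂.trans (hb'.trans hbp.symm))
  have hβ₁ : β₁ ≤ 0 := by
    have := dot_le_supportFun hc₂ hy₁ b
    rw [dot_add_smul_perp, hb', ← hbp] at this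
    nlinarith
  have hα₂ : 0 ≤ α₂ := by
    have := dot_le_supportFun hc₁ hx₂ a
    rw [dot_add_smul_perp, ← hap, cross_comm] at this
    nlinarith
  have h₁ : α₁ < β₁ := by
    have := hsep _ hx₁ _ hy₁
    rw [dot_add_smul_perp, dot_add_smul_perp, cross_comm u a] at this
    nlinarith
  have h₂ : α₂ < β₂ := by
    have := hsep _ hx₂ _ hy₂
    rw [dot_add_smul_perp, dot_add_smul_perp, cross_comm u b] at this
    nlinarith
  obtain ⟨z, hz₁, hz₂⟩ := segment_inter_nonempty p (perp a) (perp b) h₁ hβ₁ hα₂ h₂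
  exact disjoint_left.mp hdisj (hv₁.segment_subset hx₁ hx₂ hz₁) (hv₂.segment_subset hy₁ hy₂ hz₂)

lemma eq_of_mem_unitZeros_outerGap (hdisj : Disjoint H₁ H₂)
    (hc₁ : IsCompact H₁) (hc₂ : IsCompact H₂) (hv₁ : Convex ℝ H₁) (hv₂ : Convex ℝ H₂)
    (hne₁ : H₁.Nonempty) (hne₂ : H₂.Nonempty) (hsep : ∀ x ∈ H₁, ∀ y ∈ H₂, dot u y < dot u x)
    {a b : ℝ × ℝ} (ha : a ∈ unitZeros (outerGap H₁ H₂)) (hb : b ∈ unitZeros (outerGap H₁ H₂))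
    (hab : 0 < cross u a * cross u b) : a = b := by
  refine eq_of_cross_eq_zero ha.1 hb.1 ?_ hab
  have hba := cross_comm a b
  rcases pos_and_pos_or_neg_and_neg_of_mul_pos hab with ⟨hua, hub⟩ | ⟨hua, hub⟩
  · linarith [cross_nonpos_of_mem_unitZeros_outerGap hdisj hc₁ hc₂ hv₁ hv₂ hne₁ hne₂ hsep
      ha hb hua hub, cross_nonpos_of_mem_unitZeros_outerGap hdisj hc₁ hc₂ hv₁ hv₂ hne₁ hne₂ hsep
      hb ha hub hua]
  · have hswap : unitZeros (outerGap H₂ H₁) = unitZeros (outerGap H₁ H₂) := by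
      ext a; simp only [unitZeros, outerGap, mem_ofPred_eq, sub_eq_zero, eq_comm]
    have hsep' : ∀ y ∈ H₂, ∀ x ∈ H₁, dot (-u) x < dot (-u) y := fun y hy x hx => by
      simpa only [dot_neg_left, neg_lt_neg_iff] using hsep x hx y hy
    rw [← hswap] at ha hb
    rw [← neg_pos, ← cross_neg_left] at hua hub
    linarith [cross_nonpos_of_mem_unitZeros_outerGap hdisj.symm hc₂ hc₁ hv₂ hv₁ hne₂ hne₁ hsep'
      ha hb hua hub, cross_nonpos_of_mem_unitZeros_outerGap hdisj.symm hc₂ hc₁ hv₂ hv₁ hne₂ hne₁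
      hsep' hb ha hub hua]

lemma cross_mul_cross_nonpos_of_mem_unitZeros_innerGap (hc₁ : IsCompact H₁)
    (hc₂ : IsCompact H₂) (hne₁ : H₁.Nonempty) (hne₂ : H₂.Nonempty)
    (hsep : ∀ x ∈ H₁, ∀ y ∈ H₂, dot u y < dot u x) {a b : ℝ × ℝ}
    (ha : a ∈ unitZeros (innerGap H₁ H₂)) (hb : b ∈ unitZeros (innerGap H₁ H₂)) :
    cross a b * cross u b ≤ 0 := by
  by_contra! hpos
  have hcross : cross a b ≠ 0 := left_ne_zero_of_mul hpos.ne'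
  -- Both touching points of the line with normal `b` lie on the same side of `p`, the meeting
  -- point of the two lines, which puts `p` between the two sets in the direction `u`.
  have ha' : supportFun H₂ (-a) = -supportFun H₁ a := eq_neg_of_add_eq_zero_right ha.2
  have hb' : supportFun H₂ (-b) = -supportFun H₁ b := eq_neg_of_add_eq_zero_right hb.2
  obtain ⟨p, hap, hbp⟩ := exists_dot_eq_dot_eq hcross (supportFun H₁ a) (supportFun H₁ b)
  obtain ⟨x, hx, hbx⟩ := exists_dot_eq_supportFun hc₁ hne₁ b
  obtain ⟨y, hy, hby⟩ := exists_dot_eq_supportFun hc₂ hne₂ (-b)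
  rw [hb', dot_neg_left, neg_inj] at hby
  obtain ⟨α, rfl⟩ := eq_add_smul_perp_of_dot_eq hb.1 (hbx.trans hbp.symm)
  obtain ⟨β, rfl⟩ := eq_add_smul_perp_of_dot_eq hb.1 (hby.trans hbp.symm)
  have hα := dot_le_supportFun hc₁ hx a
  have hβ := dot_le_supportFun hc₂ hy (-a)
  have hu := hsep _ hx _ hy
  rw [dot_add_smul_perp, ← hap, cross_comm] at hα
  rw [dot_neg_left, dot_add_smul_perp, ha', ← hap, cross_comm] at hβ
  rw [dot_add_smul_perp, dot_add_smul_perp, cross_comm u b] at hu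
  have hαs : 0 ≤ α * cross u b := by
    nlinarith [mul_nonneg (by linarith : 0 ≤ α * cross a b) hpos.le, mul_self_pos.mpr hcross]
  have hβs : β * cross u b ≤ 0 := by
    nlinarith [mul_nonneg (by linarith : 0 ≤ -(β * cross a b)) hpos.le, mul_self_pos.mpr hcross]
  linarith

lemma eq_of_mem_unitZeros_innerGap (hc₁ : IsCompact H₁) (hc₂ : IsCompact H₂)
    (hne₁ : H₁.Nonempty) (hne₂ : H₂.Nonempty) (hsep : ∀ x ∈ H₁, ∀ y ∈ H₂, dot u y < dot u x)
    {a b : ℝ × ℝ} (ha : a ∈ unitZeros (innerGap H₁ H₂)) (hb : b ∈ unitZeros (innerGap H₁ H₂))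
    (hab : 0 < cross u a * cross u b) : a = b := by
  refine eq_of_cross_eq_zero ha.1 hb.1 (by_contra fun hcross => ?_) hab
  have hab' := cross_mul_cross_nonpos_of_mem_unitZeros_innerGap hc₁ hc₂ hne₁ hne₂ hsep ha hb
  have hba := cross_mul_cross_nonpos_of_mem_unitZeros_innerGap hc₁ hc₂ hne₁ hne₂ hsep hb ha
  rw [cross_comm, neg_mul] at hba
  nlinarith [mul_pos (mul_self_pos.mpr hcross) hab,
    mul_nonpos_of_nonpos_of_nonneg hab' (neg_nonpos.mp hba)]

lemma ncard_unitZeros_outerGap (hdisj : Disjoint H₁ H₂)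
    (hc₁ : IsCompact H₁) (hc₂ : IsCompact H₂) (hv₁ : Convex ℝ H₁) (hv₂ : Convex ℝ H₂)
    (hne₁ : H₁.Nonempty) (hne₂ : H₂.Nonempty) (hu : u.1 ^ 2 + u.2 ^ 2 = 1)
    (hsep : ∀ x ∈ H₁, ∀ y ∈ H₂, dot u y < dot u x) :
    (unitZeros (outerGap H₁ H₂)).ncard = 2 := by
  have hlt := supportFun_add_supportFun_neg_lt_zero hc₁ hc₂ hne₁ hne₂ hsep
  have h₁ := supportFun_add_supportFun_neg_nonneg hc₁ hne₁ u
  have h₂ := supportFun_add_supportFun_neg_nonneg hc₂ hne₂ u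
  refine ncard_unitZeros_eq_two ((continuous_supportFun hc₁).sub (continuous_supportFun hc₂)) hu
    ?_ ?_ fun a ha b hb => eq_of_mem_unitZeros_outerGap hdisj hc₁ hc₂ hv₁ hv₂ hne₁ hne₂ hsep ha hb
  all_goals simp only [outerGap]; linarith

lemma ncard_unitZeros_innerGap (hc₁ : IsCompact H₁) (hc₂ : IsCompact H₂)
    (hne₁ : H₁.Nonempty) (hne₂ : H₂.Nonempty) (hu : u.1 ^ 2 + u.2 ^ 2 = 1)
    (hsep : ∀ x ∈ H₁, ∀ y ∈ H₂, dot u y < dot u x) :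
    (unitZeros (innerGap H₁ H₂)).ncard = 2 := by
  have hlt := supportFun_add_supportFun_neg_lt_zero hc₁ hc₂ hne₁ hne₂ hsep
  have h₁ := supportFun_add_supportFun_neg_nonneg hc₁ hne₁ u
  have h₂ := supportFun_add_supportFun_neg_nonneg hc₂ hne₂ u
  refine ncard_unitZeros_eq_two ((continuous_supportFun hc₁).add
    ((continuous_supportFun hc₂).comp continuous_neg)) hu ?_ ?_
    fun a ha b hb => eq_of_mem_unitZeros_innerGap hc₁ hc₂ hne₁ hne₂ hsep ha hb
  all_goals simp only [innerGap, neg_neg]; linarith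

end Separated

end CommonSupportingLines

open CommonSupportingLines in
/-- Two disjoint compact convex planar sets with nonempty interiors have exactly
four common (non-directed) supporting lines. -/
theorem four_common_supporting_lines
    (H₁ H₂ : Set (ℝ × ℝ)) (hdisj : Disjoint H₁ H₂)
    (hc₁ : IsCompact H₁) (hc₂ : IsCompact H₂)
    (hv₁ : Convex ℝ H₁) (hv₂ : Convex ℝ H₂)
    (hi₁ : (interior H₁).Nonempty) (hi₂ : (interior H₂).Nonempty) :
    {L : Set (ℝ × ℝ) | IsSupportingLine L H₁ ∧ IsSupportingLine L H₂}.ncard = 4 := by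
  have hne₁ : H₁.Nonempty := hi₁.mono interior_subset
  have hne₂ : H₂.Nonempty := hi₂.mono interior_subset
  obtain ⟨u, hu, hsep⟩ := exists_unit_dot_lt_dot hdisj hc₁ hc₂ hv₁ hv₂
  have hout := ncard_unitZeros_outerGap hdisj hc₁ hc₂ hv₁ hv₂ hne₁ hne₂ hu hsep
  have hin := ncard_unitZeros_innerGap hc₁ hc₂ hne₁ hne₂ hu hsep
  rw [setOf_isSupportingLine_eq_image hc₁ hc₂ hne₁ hne₂,
    ((injOn_supportLine hc₁ hi₁).mono
      (union_subset (fun a ha => ha.1) (fun a ha => ha.1))).ncard_image,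
    ncard_union_eq (disjoint_unitZeros_outerGap_innerGap hc₂ hi₂)
      (finite_of_ncard_pos (by omega)) (finite_of_ncard_pos (by omega)), hout, hin]
end

section
/- Let 0 < u, let f : ℝ → ℝ be convex on the open interval (−u, u), and let 0 < v < u. Then the set {x + d : x ∈ [−v, v], d ∈ ∂f(x)} equals the closed interval [w₁, w₂], where w₁ = −v + sInf(∂f(−v)) and w₂ = v + sSup(∂f(v)). In particular, for every s with w₁ ≤ s ≤ w₂ there exist x₀ ∈ [−v, v] and d₀ ∈ ∂f(x₀) such that x₀ + d₀ = s. -/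
open Set

/-- The subdifferential of `f` at `x₀`, relative to the open interval `(-u, u)`. -/
def subdiff (u : ℝ) (f : ℝ → ℝ) (x₀ : ℝ) : Set ℝ :=
  {d : ℝ | ∀ x ∈ Set.Ioo (-u) u, f x₀ + d * (x - x₀) ≤ f x}

section Aux

variable {u : ℝ} {f : ℝ → ℝ}

lemma subdiff_bddAbove {p : ℝ} (hp : p ∈ Set.Ioo (-u) u) :
    BddAbove (subdiff u f p) := by
  refine ⟨(f ((p + u) / 2) - f p) / ((p + u) / 2 - p), ?_⟩
  intro d hd
  have hy : (p + u) / 2 ∈ Set.Ioo (-u) u := ⟨by linarith [hp.1, hp.2], by linarith [hp.2]⟩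
  have h := hd _ hy
  have hpos : (0 : ℝ) < (p + u) / 2 - p := by linarith [hp.2]
  rw [le_div_iff₀ hpos]
  linarith

lemma subdiff_bddBelow {p : ℝ} (hp : p ∈ Set.Ioo (-u) u) :
    BddBelow (subdiff u f p) := by
  refine ⟨(f ((p + -u) / 2) - f p) / ((p + -u) / 2 - p), ?_⟩
  intro d hd
  have hy : (p + -u) / 2 ∈ Set.Ioo (-u) u := ⟨by linarith [hp.1], by linarith [hp.1, hp.2]⟩
  have h := hd _ hy
  have hneg : (p + -u) / 2 - p < 0 := by linarith [hp.1]
  rw [div_le_iff_of_neg hneg]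
  linarith

lemma subdiff_isClosed (p : ℝ) : IsClosed (subdiff u f p) := by
  have : subdiff u f p = ⋂ x ∈ Set.Ioo (-u) u, {d : ℝ | f p + d * (x - p) ≤ f x} := by
    ext d
    simp [subdiff, Set.mem_iInter]
  rw [this]
  exact isClosed_biInter fun x _ => isClosed_le (by fun_prop) continuous_const

lemma subdiff_nonempty (hf : ConvexOn ℝ (Set.Ioo (-u) u) f) {p : ℝ}
    (hp : p ∈ Set.Ioo (-u) u) : (subdiff u f p).Nonempty := by
  set S : Set ℝ := (fun y => (f y - f p) / (y - p)) '' Set.Ioo p u with hS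
  have hy₀ : (p + u) / 2 ∈ Set.Ioo p u := ⟨by linarith [hp.2], by linarith [hp.2]⟩
  have hSne : S.Nonempty := ⟨_, ⟨_, hy₀, rfl⟩⟩
  have hx₁mem : (p + -u) / 2 ∈ Set.Ioo (-u) u := ⟨by linarith [hp.1], by linarith [hp.1, hp.2]⟩
  have hx₁lt : (p + -u) / 2 < p := by linarith [hp.1]
  have hSbdd : BddBelow S := by
    refine ⟨(f p - f ((p + -u) / 2)) / (p - (p + -u) / 2), ?_⟩
    rintro z ⟨y, hy, rfl⟩
    exact hf.slope_mono_adjacent hx₁mem ⟨by linarith [hp.1, hy.1], hy.2⟩ hx₁lt hy.1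
  refine ⟨sInf S, ?_⟩
  intro x hx
  rcases lt_trichotomy x p with h | h | h
  · have hlb : (f p - f x) / (p - x) ≤ sInf S := by
      refine le_csInf hSne ?_
      rintro z ⟨y, hy, rfl⟩
      exact hf.slope_mono_adjacent hx ⟨by linarith [hp.1, hy.1], hy.2⟩ h hy.1
    have hpx : 0 < p - x := by linarith
    rw [div_le_iff₀ hpx] at hlb
    nlinarith [csInf_le hSbdd (⟨_, hy₀, rfl⟩ : (f ((p+u)/2) - f p) / ((p+u)/2 - p) ∈ S)]
  · subst h; simp
  · have hub : sInf S ≤ (f x - f p) / (x - p) :=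
      csInf_le hSbdd ⟨x, ⟨h, hx.2⟩, rfl⟩
    have hxp : 0 < x - p := by linarith
    rw [le_div_iff₀ hxp] at hub
    linarith

lemma subdiff_mono {p q d e : ℝ} (hp : p ∈ Set.Ioo (-u) u) (hq : q ∈ Set.Ioo (-u) u)
    (hpq : p < q) (hd : d ∈ subdiff u f p) (he : e ∈ subdiff u f q) : d ≤ e := by
  have h1 := hd q hq
  have h2 := he p hp
  nlinarith

/-- Directional optimality lemma: if `x₀` minimizes `f z + (z-s)²/2` on `[-v,v]` and the
segment from `x₀` towards `x` stays in `[-v,v]` for small positive times, then the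
subgradient inequality holds for `d = s - x₀` at `x`. -/
lemma subdiff_key (hf : ConvexOn ℝ (Set.Ioo (-u) u) f) {v s x₀ x : ℝ}
    (hx₀ : x₀ ∈ Set.Icc (-v) v) (hsub : Set.Icc (-v) v ⊆ Set.Ioo (-u) u)
    (hmin : ∀ z ∈ Set.Icc (-v) v, f x₀ + (x₀ - s) ^ 2 / 2 ≤ f z + (z - s) ^ 2 / 2)
    (hx : x ∈ Set.Ioo (-u) u) {t₀ : ℝ} (ht₀ : 0 < t₀) (ht₀1 : t₀ ≤ 1)
    (hseg : ∀ t : ℝ, 0 < t → t ≤ t₀ → x₀ + t * (x - x₀) ∈ Set.Icc (-v) v) :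
    f x₀ + (s - x₀) * (x - x₀) ≤ f x := by
  rcases eq_or_ne x x₀ with rfl | hne
  · simp
  have hh2 : 0 < (x - x₀) ^ 2 := by
    have : x - x₀ ≠ 0 := sub_ne_zero.mpr hne
    positivity
  refine le_of_forall_pos_le_add fun ε hε => ?_
  have ht_pos : 0 < min t₀ (2 * ε / (x - x₀) ^ 2) := lt_min ht₀ (by positivity)
  obtain ⟨t, ht, ht_pos, ht_le, htd⟩ :
      ∃ t : ℝ, t = min t₀ (2 * ε / (x - x₀) ^ 2) ∧ 0 < t ∧ t ≤ t₀ ∧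
        t ≤ 2 * ε / (x - x₀) ^ 2 :=
    ⟨_, rfl, ht_pos, min_le_left _ _, min_le_right _ _⟩
  have ht1 : t ≤ 1 := ht_le.trans ht₀1
  have htε : t * (x - x₀) ^ 2 ≤ 2 * ε := by
    calc t * (x - x₀) ^ 2 ≤ (2 * ε / (x - x₀) ^ 2) * (x - x₀) ^ 2 := by nlinarith
      _ = 2 * ε := by field_simp
  have hz : x₀ + t * (x - x₀) ∈ Set.Icc (-v) v := hseg t ht_pos ht_le
  have hB := hmin _ hz
  have hA : f (x₀ + t * (x - x₀)) ≤ (1 - t) * f x₀ + t * f x := by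
    have := hf.2 (hsub hx₀) hx (by linarith : (0:ℝ) ≤ 1 - t) (le_of_lt ht_pos)
      (by ring : (1 - t) + t = 1)
    have heq : (1 - t) • x₀ + t • x = x₀ + t * (x - x₀) := by
      simp only [smul_eq_mul]; ring
    rwa [heq] at this
  have h4 : 0 ≤ t * (f x - f x₀ + (x - x₀) * (x₀ - s) + t * (x - x₀) ^ 2 / 2) := by
    nlinarith
  have h5 : 0 ≤ f x - f x₀ + (x - x₀) * (x₀ - s) + t * (x - x₀) ^ 2 / 2 :=
    nonneg_of_mul_nonneg_right h4 ht_pos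
  nlinarith

end Aux

/-- For a convex function `f` on `(-u, u)` and `0 < v < u`, the set
`{x + d : x ∈ [-v, v], d ∈ ∂f(x)}` equals the closed interval
`[-v + inf ∂f(-v), v + sup ∂f(v)]`. -/
theorem subdiff_sum_range (u : ℝ) (hu : 0 < u) (f : ℝ → ℝ)
    (hf : ConvexOn ℝ (Set.Ioo (-u) u) f)
    (v : ℝ) (hv : 0 < v) (hvu : v < u) :
    {s : ℝ | ∃ x ∈ Set.Icc (-v) v, ∃ d ∈ subdiff u f x, s = x + d} =
      Set.Icc (-v + sInf (subdiff u f (-v))) (v + sSup (subdiff u f v)) := by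
  have hsub : Set.Icc (-v) v ⊆ Set.Ioo (-u) u := fun z hz =>
    ⟨by linarith [hz.1], by linarith [hz.2]⟩
  have hvmem : v ∈ Set.Ioo (-u) u := ⟨by linarith, hvu⟩
  have hnvmem : -v ∈ Set.Ioo (-u) u := ⟨by linarith, by linarith⟩
  have hsupv : sSup (subdiff u f v) ∈ subdiff u f v :=
    (subdiff_isClosed v).csSup_mem (subdiff_nonempty hf hvmem) (subdiff_bddAbove hvmem)
  have hinfnv : sInf (subdiff u f (-v)) ∈ subdiff u f (-v) :=
    (subdiff_isClosed (-v)).csInf_mem (subdiff_nonempty hf hnvmem) (subdiff_bddBelow hnvmem)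
  ext s
  simp only [Set.mem_setOf_eq, Set.mem_Icc]
  constructor
  · rintro ⟨x, hx, d, hd, rfl⟩
    have hxmem : x ∈ Set.Ioo (-u) u := hsub hx
    constructor
    · have hinf : sInf (subdiff u f (-v)) ≤ d := by
        rcases eq_or_lt_of_le hx.1 with h | h
        · exact csInf_le (subdiff_bddBelow hnvmem) (h ▸ hd)
        · exact subdiff_mono hnvmem hxmem h hinfnv hd
      linarith [hx.1]
    · have hsup : d ≤ sSup (subdiff u f v) := by
        rcases eq_or_lt_of_le hx.2 with h | h
        · exact le_csSup (subdiff_bddAbove hvmem) (h ▸ hd)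
        · exact subdiff_mono hxmem hvmem h hd hsupv
      linarith [hx.2]
  · rintro ⟨hs1, hs2⟩
    -- minimize g z = f z + (z - s)^2 / 2 over [-v, v]
    have hcont : ContinuousOn (fun z => f z + (z - s) ^ 2 / 2) (Set.Icc (-v) v) := by
      exact ((hf.continuousOn isOpen_Ioo).mono hsub).add (by fun_prop)
    obtain ⟨x₀, hx₀, hminOn⟩ := isCompact_Icc.exists_isMinOn
      (Set.nonempty_Icc.mpr (by linarith)) hcont
    have hmin : ∀ z ∈ Set.Icc (-v) v, f x₀ + (x₀ - s) ^ 2 / 2 ≤ f z + (z - s) ^ 2 / 2 :=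
      fun z hz => hminOn hz
    rcases eq_or_lt_of_le hx₀.1 with hleft | hleft
    · -- x₀ = -v : d = s + v is a subgradient at -v
      rw [← hleft] at hmin
      have hd : s - (-v) ∈ subdiff u f (-v) := by
        intro x hx
        rcases lt_trichotomy x (-v) with hlt | heq | hgt
        · -- use the subgradient sInf at -v
          have h1 := hinfnv x hx
          have h2 : -v + sInf (subdiff u f (-v)) ≤ s := hs1
          nlinarith
        · subst heq; simp
        · -- apply the key lemma along the admissible direction
          have hx₀' : -v ∈ Set.Icc (-v) v := ⟨le_refl _, by linarith⟩
          have ht₀pos : (0:ℝ) < min 1 (2 * v / (x - -v)) := by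
            apply lt_min one_pos
            apply div_pos (by linarith) (by linarith)
          have hkey := subdiff_key hf hx₀' hsub hmin hx ht₀pos
            (min_le_left _ _) ?_
          · linarith [hkey]
          · intro t ht htle
            have h1 : t ≤ 2 * v / (x - -v) := htle.trans (min_le_right _ _)
            have hxp : 0 < x - -v := by linarith
            constructor
            · nlinarith
            · have h2 : t * (x - -v) ≤ 2 * v := (le_div_iff₀ hxp).mp h1
              nlinarith
      exact ⟨-v, ⟨le_refl _, by linarith⟩, s - (-v), hd, by ring⟩
    rcases eq_or_lt_of_le hx₀.2 with hright | hright
    · -- x₀ = v : d = s - v is a subgradient at v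
      rw [hright] at hmin
      have hd : s - v ∈ subdiff u f v := by
        intro x hx
        rcases lt_trichotomy x v with hlt | heq | hgt
        · have hx₀' : v ∈ Set.Icc (-v) v := ⟨by linarith, le_refl _⟩
          have ht₀pos : (0:ℝ) < min 1 (2 * v / (v - x)) := by
            apply lt_min one_pos
            apply div_pos (by linarith) (by linarith)
          have hkey := subdiff_key hf hx₀' hsub hmin hx ht₀pos
            (min_le_left _ _) ?_
          · linarith [hkey]
          · intro t ht htle
            have h1 : t ≤ 2 * v / (v - x) := htle.trans (min_le_right _ _)
            have hxp : 0 < v - x := by linarith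
            constructor
            · have h2 : t * (v - x) ≤ 2 * v := (le_div_iff₀ hxp).mp h1
              nlinarith
            · nlinarith
        · subst heq; simp
        · have h1 := hsupv x hx
          have h2 : s ≤ v + sSup (subdiff u f v) := hs2
          nlinarith
      exact ⟨v, ⟨by linarith, le_refl _⟩, s - v, hd, by ring⟩
    · -- x₀ interior : d = s - x₀
      have hd : s - x₀ ∈ subdiff u f x₀ := by
        intro x hx
        rcases eq_or_ne x x₀ with rfl | hne
        · simp
        · have habs : 0 < |x - x₀| := abs_pos.mpr (sub_ne_zero.mpr hne)
          set δ : ℝ := min (v - x₀) (x₀ + v) with hδ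
          have hδpos : 0 < δ := lt_min (by linarith) (by linarith)
          have ht₀pos : (0:ℝ) < min 1 (δ / |x - x₀|) := lt_min one_pos (div_pos hδpos habs)
          have hkey := subdiff_key hf hx₀ hsub hmin hx ht₀pos (min_le_left _ _) ?_
          · linarith [hkey]
          · intro t ht htle
            have h1 : t ≤ δ / |x - x₀| := htle.trans (min_le_right _ _)
            have h2 : t * |x - x₀| ≤ δ := (le_div_iff₀ habs).mp h1
            have h3 : |t * (x - x₀)| ≤ δ := by
              rwa [abs_mul, abs_of_pos ht]
            rw [abs_le] at h3
            constructor
            · have : -(x₀ + v) ≤ t * (x - x₀) := by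
                have := h3.1
                have : -δ ≤ t * (x - x₀) := this
                have hδle : δ ≤ x₀ + v := min_le_right _ _
                linarith
              linarith
            · have : t * (x - x₀) ≤ v - x₀ := h3.2.trans (min_le_left _ _)
              linarith
      exact ⟨x₀, hx₀, s - x₀, hd, by ring⟩
end

section
/- Let 0 < u, let f : ℝ → ℝ be convex on the open interval (−u, u), let 0 < v < u, and let D = {(x, d) ∈ ℝ × ℝ : x ∈ [−v, v] and d ∈ ∂f(x)}. Then for all (x₁, d₁), (x₂, d₂) ∈ D one has |(x₁ + d₁) − (x₂ + d₂)| = |x₁ − x₂| + |d₁ − d₂|; that is, on D the map (x, d) ↦ x + d turns the Manhattan distance into the absolute difference of values. In particular, (x, d) ↦ x + d is injective on D. -/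
open Set

/-- On `D = {(x, d) : x ∈ [-v, v], d ∈ ∂f(x)}`, the map `(x, d) ↦ x + d` turns the
Manhattan distance into the absolute difference of values:
`|(x₁ + d₁) − (x₂ + d₂)| = |x₁ − x₂| + |d₁ − d₂|`. -/
theorem subdiff_sum_manhattan (u : ℝ) (hu : 0 < u) (f : ℝ → ℝ)
    (hf : ConvexOn ℝ (Set.Ioo (-u) u) f)
    (v : ℝ) (hv : 0 < v) (hvu : v < u)
    (x₁ d₁ x₂ d₂ : ℝ)
    (hx₁ : x₁ ∈ Set.Icc (-v) v) (hd₁ : d₁ ∈ subdiff u f x₁)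
    (hx₂ : x₂ ∈ Set.Icc (-v) v) (hd₂ : d₂ ∈ subdiff u f x₂) :
    |(x₁ + d₁) - (x₂ + d₂)| = |x₁ - x₂| + |d₁ - d₂| := by
  have hm₁ : x₁ ∈ Set.Ioo (-u) u :=
    ⟨lt_of_lt_of_le (by linarith) hx₁.1, lt_of_le_of_lt hx₁.2 hvu⟩
  have hm₂ : x₂ ∈ Set.Ioo (-u) u :=
    ⟨lt_of_lt_of_le (by linarith) hx₂.1, lt_of_le_of_lt hx₂.2 hvu⟩
  have h1 := hd₁ x₂ hm₂
  have h2 := hd₂ x₁ hm₁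
  have key : 0 ≤ (x₁ - x₂) * (d₁ - d₂) := by nlinarith
  have : (x₁ + d₁) - (x₂ + d₂) = (x₁ - x₂) + (d₁ - d₂) := by ring
  rw [this]
  rcases le_or_gt 0 (x₁ - x₂) with ha | ha <;> rcases le_or_gt 0 (d₁ - d₂) with hb | hb
  · rw [abs_of_nonneg ha, abs_of_nonneg hb, abs_of_nonneg (by linarith)]
  · have hx : x₁ - x₂ = 0 := by nlinarith
    rw [hx]; simp
  · have hd : d₁ - d₂ = 0 := by nlinarith
    rw [hd]; simp
  · rw [abs_of_nonpos ha.le, abs_of_nonpos hb.le, abs_of_nonpos (by linarith)]; ring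
end

section
/- Let H be a nonempty compact convex subset of the plane ℝ² = ℝ × ℝ, let F = {P ∈ ℝ² : infDist(P, H) = 1} (the boundary of the parallel body of H at distance 1), and let S(H) ⊆ (ℝ × ℝ) × (ℝ × ℝ) be the slide curve of H. Then there exists a bijection Φ : F → S(H) such that for every P ∈ F, writing Φ(P) = (P*, u): P* ∈ H, dist(P, P*) = 1, and u = rot90(P − P*) where rot90(a, b) = (−b, a); moreover both Φ and its inverse are Lipschitz in the small: there exist δ > 0 and L ≥ 0 such that dist(Φ(P), Φ(Q)) ≤ L·dist(P, Q) whenever P, Q ∈ F with dist(P, Q) ≤ δ, and dist(Φ⁻¹(s), Φ⁻¹(s')) ≤ L·dist(s, s') whenever s, s' ∈ S(H) with dist(s, s') ≤ δ. -/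
open Set

/-- The Euclidean distance on `ℝ × ℝ`. -/
noncomputable def edist2 (p q : ℝ × ℝ) : ℝ :=
  Real.sqrt ((p.1 - q.1) ^ 2 + (p.2 - q.2) ^ 2)

/-- The Euclidean infimum distance from a point to a set in `ℝ × ℝ`. -/
noncomputable def einfDist (p : ℝ × ℝ) (H : Set (ℝ × ℝ)) : ℝ :=
  sInf (Set.image (edist2 p) H)

/-- Counterclockwise rotation of a planar vector by 90 degrees. -/
def rot90 (w : ℝ × ℝ) : ℝ × ℝ := (-w.2, w.1)

/-!
The point `P*` is the metric projection of `P` onto `H`. For convex `H` it is characterized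
by the variational inequality `⟪P - P*, W - P*⟫ ≤ 0` for all `W ∈ H`, which makes it unique
and 1-Lipschitz. Since `cross u w = ⟪rot90 u, w⟫`, for `P` at distance `1` this inequality
says exactly that `(P*, rot90 (P - P*))` is a pointed supporting line; conversely a pointed
supporting line `(Q, u)` comes from `P = Q - rot90 u`, whose projection is `Q` by uniqueness.
So `Φ` is inverted by `(Q, u) ↦ Q - rot90 u`, and both maps are globally Lipschitz.
-/

open scoped RealInnerProductSpace

section MetricProjection

variable {E : Type*} [NormedAddCommGroup E] [InnerProductSpace ℝ E]

/-- `v` is the metric projection of `u` onto `K` in variational form; for convex `K` this says that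
`v` is the point of `K` nearest to `u` (`norm_eq_iInf_iff_real_inner_le_zero`). -/
def IsMetricProj (K : Set E) (u v : E) : Prop :=
  v ∈ K ∧ ∀ w ∈ K, ⟪u - v, w - v⟫ ≤ 0

theorem exists_isMetricProj {K : Set E} (hne : K.Nonempty) (hK : IsComplete K)
    (hconv : Convex ℝ K) (u : E) : ∃ v, IsMetricProj K u v := by
  obtain ⟨v, hv, hmin⟩ := exists_norm_eq_iInf_of_complete_convex hne hK hconv u
  exact ⟨v, hv, (norm_eq_iInf_iff_real_inner_le_zero hconv hv).1 hmin⟩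

variable {K : Set E} {u u' v v' w : E}

theorem IsMetricProj.norm_sub_le (h : IsMetricProj K u v) (hw : w ∈ K) :
    ‖u - v‖ ≤ ‖u - w‖ := by
  have hexpand : ‖u - w‖ ^ 2 = ‖u - v‖ ^ 2 - 2 * ⟪u - v, w - v⟫ + ‖w - v‖ ^ 2 := by
    rw [show u - w = (u - v) - (w - v) by abel, norm_sub_sq_real]
  rw [← sq_le_sq₀ (norm_nonneg _) (norm_nonneg _), hexpand]
  nlinarith [h.2 w hw, sq_nonneg ‖w - v‖]

theorem IsMetricProj.norm_sub_le_norm_sub (h : IsMetricProj K u v)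
    (h' : IsMetricProj K u' v') : ‖v - v'‖ ≤ ‖u - u'‖ := by
  have hmono : ‖v - v'‖ ^ 2 ≤ ⟪u - u', v - v'⟫ := by
    have h₁ := h.2 v' h'.1
    have h₂ := h'.2 v h.1
    rw [← real_inner_self_eq_norm_sq]
    simp only [inner_sub_left, inner_sub_right, real_inner_comm] at h₁ h₂ ⊢
    linarith
  have := real_inner_le_norm (u - u') (v - v')
  nlinarith [norm_nonneg (v - v'), norm_nonneg (u - u')]

theorem IsMetricProj.unique (h : IsMetricProj K u v) (h' : IsMetricProj K u v') : v = v' := by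
  simpa [sub_eq_zero] using h.norm_sub_le_norm_sub h'

end MetricProjection

section Plane

open WithLp

theorem edist2_eq_dist_toLp (p q : ℝ × ℝ) : edist2 p q = dist (toLp 2 p) (toLp 2 q) := by
  simp [edist2, prod_dist_eq_of_L2, Real.dist_eq]

theorem inner_toLp_rot90 (u w : ℝ × ℝ) : ⟪toLp 2 (rot90 u), toLp 2 w⟫ = cross u w := by
  simp only [rot90, cross, prod_inner_apply, RCLike.inner_apply, Real.ringHom_apply]
  ring

theorem rot90_rot90 (w : ℝ × ℝ) : rot90 (rot90 w) = -w := rfl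

theorem rot90_neg (w : ℝ × ℝ) : rot90 (-w) = -rot90 w := rfl

theorem sub_rot90_rot90_sub (P Q : ℝ × ℝ) : Q - rot90 (rot90 (P - Q)) = P := by
  rw [rot90_rot90, sub_neg_eq_add, add_sub_cancel]

theorem rot90_sub_rot90_sub_self (Q u : ℝ × ℝ) : rot90 (Q - rot90 u - Q) = u := by
  rw [sub_sub_cancel_left, rot90_neg, rot90_rot90, neg_neg]

theorem edist2_nonneg (p q : ℝ × ℝ) : 0 ≤ edist2 p q := Real.sqrt_nonneg _

theorem dist_le_edist2 (p q : ℝ × ℝ) : dist p q ≤ edist2 p q := by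
  rw [edist2_eq_dist_toLp]
  exact max_le (WithLp.dist_fst_le _ _) (WithLp.dist_snd_le _ _)

theorem edist2_le_two_mul_dist (p q : ℝ × ℝ) : edist2 p q ≤ 2 * dist p q := by
  rw [edist2, Real.sqrt_le_left (by positivity), Prod.dist_eq, Real.dist_eq, Real.dist_eq]
  nlinarith [sq_abs (p.1 - q.1), sq_abs (p.2 - q.2), le_max_left |p.1 - q.1| |p.2 - q.2|,
    le_max_right |p.1 - q.1| |p.2 - q.2|, abs_nonneg (p.1 - q.1), abs_nonneg (p.2 - q.2)]

theorem dist_rot90 (p q : ℝ × ℝ) : dist (rot90 p) (rot90 q) = dist p q := by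
  simp [rot90, Prod.dist_eq, Real.dist_eq, max_comm]

theorem edist2_rot90 (p q : ℝ × ℝ) : edist2 (rot90 p) (rot90 q) = edist2 p q := by
  simp only [edist2, rot90]; ring_nf

variable {H : Set (ℝ × ℝ)}

theorem einfDist_eq_edist2_of_isMetricProj {P Q : ℝ × ℝ}
    (h : IsMetricProj (toLp 2 '' H) (toLp 2 P) (toLp 2 Q)) : einfDist P H = edist2 P Q := by
  refine IsLeast.csInf_eq ⟨⟨Q, (toLp_injective 2).mem_set_image.1 h.1, rfl⟩, ?_⟩
  rintro _ ⟨W, hW, rfl⟩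
  simpa [edist2_eq_dist_toLp, dist_eq_norm] using h.norm_sub_le (mem_image_of_mem _ hW)

theorem mk_mem_slideCurve_iff {Q u : ℝ × ℝ} :
    (Q, u) ∈ slideCurve H ↔
      IsMetricProj (toLp 2 '' H) (toLp 2 (Q - rot90 u)) (toLp 2 Q) ∧
        edist2 (Q - rot90 u) Q = 1 := by
  have hcross (W : ℝ × ℝ) : ⟪toLp 2 (Q - rot90 u) - toLp 2 Q, toLp 2 W - toLp 2 Q⟫ =
      -cross u (W - Q) := by
    rw [← inner_toLp_rot90, ← toLp_sub, ← toLp_sub, sub_sub_cancel_left, toLp_neg,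
      inner_neg_left]
  have hunit : edist2 (Q - rot90 u) Q = 1 ↔ u.1 ^ 2 + u.2 ^ 2 = 1 := by
    simp only [edist2, rot90, Real.sqrt_eq_one, Prod.fst_sub, Prod.snd_sub]
    constructor <;> intro h <;> linarith
  simp only [slideCurve, IsPointedSupportingLine, IsMetricProj, mem_ofPred_eq,
    (toLp_injective 2).mem_set_image, hcross, hunit, neg_nonpos]
  tauto

theorem exists_isMetricProj_toLp (hne : H.Nonempty) (hcomp : IsCompact H) (hconv : Convex ℝ H)
    (P : ℝ × ℝ) : ∃ Q, IsMetricProj (toLp 2 '' H) (toLp 2 P) (toLp 2 Q) := by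
  obtain ⟨v, hv⟩ := exists_isMetricProj (hne.image _)
    (hcomp.image (prod_continuous_toLp 2 ℝ ℝ)).isComplete
    (hconv.linear_image (WithLp.linearEquiv 2 ℝ (ℝ × ℝ)).symm.toLinearMap) (toLp 2 P)
  exact ⟨ofLp v, by simpa using hv⟩

theorem dist_mk_rot90_sub_le {P Q p q : ℝ × ℝ} (hpq : edist2 p q ≤ edist2 P Q) :
    dist (p, rot90 (P - p)) (q, rot90 (Q - q)) ≤ 2 * edist2 P Q := by
  have hPQ := dist_le_edist2 P Q
  have hpq' := (dist_le_edist2 p q).trans hpq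
  rw [Prod.dist_eq, dist_rot90]
  exact max_le (by linarith [edist2_nonneg P Q]) ((dist_sub_sub_le P p Q q).trans (by linarith))

theorem edist2_sub_rot90_le (s s' : (ℝ × ℝ) × (ℝ × ℝ)) :
    edist2 (s.1 - rot90 s.2) (s'.1 - rot90 s'.2) ≤ 4 * dist s s' := by
  have h₁ : dist s.1 s'.1 ≤ dist s s' := by rw [Prod.dist_eq]; exact le_max_left _ _
  have h₂ : dist s.2 s'.2 ≤ dist s s' := by rw [Prod.dist_eq]; exact le_max_right _ _
  calc edist2 (s.1 - rot90 s.2) (s'.1 - rot90 s'.2)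
      ≤ edist2 s.1 s'.1 + edist2 (rot90 s.2) (rot90 s'.2) := by
        simp only [edist2_eq_dist_toLp, toLp_sub]
        exact dist_sub_sub_le _ _ _ _
    _ ≤ 2 * dist s.1 s'.1 + 2 * dist s.2 s'.2 := by
        rw [edist2_rot90]
        exact add_le_add (edist2_le_two_mul_dist _ _) (edist2_le_two_mul_dist _ _)
    _ ≤ 4 * dist s s' := by linarith

end Plane

/-- For a nonempty compact convex `H ⊆ ℝ²`, there is a bijection `Φ` from
`F = {P : infDist(P, H) = 1}` (the boundary of the parallel body of `H`) onto the
slide curve `S(H)`, sending `P` to `(P*, u)` where `P* ∈ H` is at distance `1` from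
`P` and `u = rot90(P − P*)`; moreover both `Φ` and its inverse are Lipschitz in the
small. (The slide curve carries the product metric of `ℝ² × ℝ²`, which is
bi-Lipschitz equivalent to the Euclidean metric of `ℝ⁴`.) -/
theorem parallel_body_boundary_biLipschitz_slideCurve
    (H : Set (ℝ × ℝ)) (hne : H.Nonempty) (hcomp : IsCompact H) (hconv : Convex ℝ H)
    (F : Set (ℝ × ℝ)) (hF : F = {P : ℝ × ℝ | einfDist P H = 1}) :
    ∃ Φ : ℝ × ℝ → (ℝ × ℝ) × (ℝ × ℝ),
      Set.BijOn Φ F (slideCurve H) ∧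
      (∀ P ∈ F, (Φ P).1 ∈ H ∧ edist2 P (Φ P).1 = 1 ∧ (Φ P).2 = rot90 (P - (Φ P).1)) ∧
      ∃ δ : ℝ, 0 < δ ∧ ∃ L : ℝ, 0 ≤ L ∧
        (∀ P ∈ F, ∀ Q ∈ F, edist2 P Q ≤ δ → dist (Φ P) (Φ Q) ≤ L * edist2 P Q) ∧
        ∃ Ψ : (ℝ × ℝ) × (ℝ × ℝ) → ℝ × ℝ,
          Set.InvOn Ψ Φ F (slideCurve H) ∧
          ∀ s ∈ slideCurve H, ∀ s' ∈ slideCurve H,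
            dist s s' ≤ δ → edist2 (Ψ s) (Ψ s') ≤ L * dist s s' := by
  choose prj hprj using exists_isMetricProj_toLp hne hcomp hconv
  have hmem_F (P : ℝ × ℝ) : P ∈ F ↔ edist2 P (prj P) = 1 := by
    rw [hF, mem_ofPred_eq, einfDist_eq_edist2_of_isMetricProj (hprj P)]
  have hright : ∀ s ∈ slideCurve H, s.1 - rot90 s.2 ∈ F ∧
      (prj (s.1 - rot90 s.2), rot90 (s.1 - rot90 s.2 - prj (s.1 - rot90 s.2))) = s := by
    rintro ⟨Q, u⟩ hs
    obtain ⟨hproj, hunit⟩ := mk_mem_slideCurve_iff.1 hs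
    have hQ : prj (Q - rot90 u) = Q := WithLp.toLp_injective 2 ((hprj _).unique hproj)
    refine ⟨(hmem_F (Q - rot90 u)).2 (by rwa [hQ]), ?_⟩
    rw [hQ, rot90_sub_rot90_sub_self]
  have hinv : InvOn (fun s => s.1 - rot90 s.2) (fun P => (prj P, rot90 (P - prj P)))
      F (slideCurve H) :=
    ⟨fun P _ => sub_rot90_rot90_sub P (prj P), fun s hs => (hright s hs).2⟩
  have hlip (P Q : ℝ × ℝ) : edist2 (prj P) (prj Q) ≤ edist2 P Q := by
    simpa only [edist2_eq_dist_toLp, dist_eq_norm] using (hprj P).norm_sub_le_norm_sub (hprj Q)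
  have hmaps : MapsTo (fun P => (prj P, rot90 (P - prj P))) F (slideCurve H) := fun P hP =>
    mk_mem_slideCurve_iff.2 <| by rw [sub_rot90_rot90_sub]; exact ⟨hprj P, (hmem_F P).1 hP⟩
  refine ⟨_, hinv.bijOn hmaps fun s hs => (hright s hs).1,
    fun P hP => ⟨(WithLp.toLp_injective 2).mem_set_image.1 (hprj P).1, (hmem_F P).1 hP, rfl⟩,
    1, one_pos, 4, by norm_num, fun P _ Q _ _ => ?_, _, hinv,
    fun s _ s' _ _ => edist2_sub_rot90_le s s'⟩
  exact (dist_mk_rot90_sub_le (hlip P Q)).trans (by linarith [edist2_nonneg P Q])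
end
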